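/- arXiv:1102.5587 — 2 statements merged into one kernel-verified Lean document; each statement's English description precedes it below -/
import Mathlib

section
/- For the one-dimensional simple symmetric random walk, the probability c^{(2n)}(2k) that in the time interval from 0 to 2n a walker starting at the origin spends exactly 2k time units on the positive side equals (1/2)^{2n} * binom(2k, k) * binom(2(n-k), n-k), for 0 ≤ k ≤ n. -/
/-- Position of the walk after `m` steps, where `s i = true` means a `+1` step. -/
def walkPos {N : ℕ} (s : Fin N → Bool) (m : ℕ) : ℤ :=
  ∑ i ∈ Finset.range m, if h : i < N then (if s ⟨i, h⟩ then 1 else -1) else 0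

/-- Number of time units `[m, m+1]`, `0 ≤ m < N`, spent on the positive side
(Feller's convention: the unit counts if at least one endpoint is at a positive position). -/
def sojournTime {N : ℕ} (s : Fin N → Bool) : ℕ :=
  ((Finset.range N).filter (fun m => 0 < walkPos s m ∨ 0 < walkPos s (m + 1))).card

/-!
Following Feller (III.4): a time unit counts as positive exactly when the position at its odd
endpoint is positive, so the sojourn time is twice the number of odd times with positive position.
Split a walk at its first return to `0`, at time `2r`; the excursion before it is positive or
negative, each in `f_r` ways. This gives the recursion
`count n k = ∑ f_r (count (n - r) (k - r) + count (n - r) k)` for `0 < k < n`, while the same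
decomposition of walks ending at `0` gives `u_m = 2 ∑ f_r u_{m - r}` with `u_m = centralBinom m`,
and induction on `n` closes the case `0 < k < n`. For `k = n` (and `k = 0`, by reflection) the walks
with all odd positions positive are counted twice: they are twice as many as the nonnegative walks
of length `2n - 1`, and they are the strictly positive walks (as many as those nonnegative walks)
together with the walks whose first return to `0` closes a positive excursion (`u_n / 2` of them).
-/

open Finset

namespace RandomWalk

variable {N n : ℕ}

def step (s : Fin N → Bool) (i : ℕ) : ℤ :=
  if h : i < N then (if s ⟨i, h⟩ then 1 else -1) else 0

lemma walkPos_eq_sum_step (s : Fin N → Bool) (m : ℕ) :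
    walkPos s m = ∑ i ∈ range m, step s i := rfl

@[simp] lemma walkPos_zero (s : Fin N → Bool) : walkPos s 0 = 0 := rfl

lemma walkPos_succ (s : Fin N → Bool) (m : ℕ) :
    walkPos s (m + 1) = walkPos s m + step s m :=
  sum_range_succ _ _

lemma step_eq_one_or_eq_neg_one (s : Fin N → Bool) {i : ℕ} (h : i < N) :
    step s i = 1 ∨ step s i = -1 := by
  unfold step
  rw [dif_pos h]
  split <;> simp

lemma abs_step_le_one (s : Fin N → Bool) (i : ℕ) : |step s i| ≤ 1 := by
  unfold step
  split
  · split <;> simp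
  · simp

lemma walkPos_succ_le (s : Fin N → Bool) (m : ℕ) : walkPos s (m + 1) ≤ walkPos s m + 1 := by
  have := abs_le.mp (abs_step_le_one s m)
  rw [walkPos_succ]
  linarith

lemma walkPos_le_succ_add_one (s : Fin N → Bool) (m : ℕ) :
    walkPos s m ≤ walkPos s (m + 1) + 1 := by
  have := abs_le.mp (abs_step_le_one s m)
  rw [walkPos_succ]
  linarith

lemma even_walkPos_add (s : Fin N → Bool) {m : ℕ} (hm : m ≤ N) : Even (walkPos s m + m) := by
  induction m with
  | zero => simp
  | succ m ih =>
    obtain ⟨c, hc⟩ := ih (by omega)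
    rw [walkPos_succ]
    rcases step_eq_one_or_eq_neg_one s (i := m) (by omega) with h | h <;> rw [h]
    · exact ⟨c + 1, by push_cast; linarith⟩
    · exact ⟨c, by push_cast; linarith⟩

lemma walkPos_ne_zero_of_odd (s : Fin N → Bool) {m : ℕ} (hm : m ≤ N) (hodd : Odd m) :
    walkPos s m ≠ 0 := by
  intro h
  have := even_walkPos_add s hm
  rw [h, zero_add, Int.even_coe_nat] at this
  exact Nat.not_even_iff_odd.mpr hodd this

lemma two_le_walkPos_of_even (s : Fin N → Bool) {m : ℕ} (hm : m ≤ N) (heven : Even m)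
    (hpos : 0 < walkPos s m) : 2 ≤ walkPos s m := by
  obtain ⟨c, hc⟩ := even_walkPos_add s hm
  obtain ⟨d, rfl⟩ := heven
  push_cast at hc
  omega

lemma walkPos_pos_of_ne_zero (s : Fin N → Bool) {b : ℕ}
    (hne : ∀ m, 0 < m → m ≤ b → walkPos s m ≠ 0) (h1 : 0 < walkPos s 1) :
    ∀ m, 0 < m → m ≤ b → 0 < walkPos s m := by
  intro m hm hmb
  induction m, hm using Nat.le_induction with
  | base => exact h1
  | succ m hm ih =>
    have := walkPos_le_succ_add_one s m
    have := hne (m + 1) (by omega) hmb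
    have := ih (by omega)
    omega

def reflect (s : Fin N → Bool) : Fin N → Bool := fun i => !s i

lemma reflect_involutive : Function.Involutive (reflect (N := N)) := by
  intro s
  funext i
  simp [reflect]

lemma walkPos_reflect (s : Fin N → Bool) (m : ℕ) : walkPos (reflect s) m = -walkPos s m := by
  rw [walkPos_eq_sum_step, walkPos_eq_sum_step, ← sum_neg_distrib]
  refine sum_congr rfl fun i _ => ?_
  unfold step reflect
  split
  · split <;> simp_all
  · simp

lemma card_filter_reflect (p : (Fin N → Bool) → Prop) [DecidablePred p] :
    #{s | p s} = #{s | p (reflect s)} :=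
  card_equiv reflect_involutive.toPerm (by simp [reflect_involutive _])

section Append

variable {a b : ℕ}

def append (h : a + b = N) (e : Fin a → Bool) (t : Fin b → Bool) : Fin N → Bool :=
  fun i => if hi : (i : ℕ) < a then e ⟨i, hi⟩ else t ⟨i - a, by omega⟩

def appendEquiv (h : a + b = N) : (Fin a → Bool) × (Fin b → Bool) ≃ (Fin N → Bool) where
  toFun x := append h x.1 x.2
  invFun s := (fun i => s ⟨i, by omega⟩, fun i => s ⟨a + i, by omega⟩)
  left_inv x := by
    ext i <;> simp [append]
  right_inv s := by
    funext i
    by_cases hi : (i : ℕ) < a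
    · simp [append, hi]
    · simp only [append, hi]
      exact congrArg s (Fin.ext (by simp; omega))

lemma step_append (h : a + b = N) (e : Fin a → Bool) (t : Fin b → Bool) (i : ℕ) :
    step (append h e t) i = if i < a then step e i else step t (i - a) := by
  by_cases hia : i < a
  · simp [step, append, hia, show i < N by omega]
  · by_cases hiN : i < N
    · simp [step, append, hia, hiN, show i - a < b by omega]
    · simp [step, hia, hiN, show ¬ i - a < b by omega]

lemma walkPos_append_of_le (h : a + b = N) (e : Fin a → Bool) (t : Fin b → Bool) {m : ℕ}
    (hm : m ≤ a) : walkPos (append h e t) m = walkPos e m := by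
  rw [walkPos_eq_sum_step, walkPos_eq_sum_step]
  exact sum_congr rfl fun i hi => by rw [step_append, if_pos (by simp at hi; omega)]

lemma walkPos_append_add (h : a + b = N) (e : Fin a → Bool) (t : Fin b → Bool) (u : ℕ) :
    walkPos (append h e t) (a + u) = walkPos e a + walkPos t u := by
  rw [walkPos_eq_sum_step, sum_range_add, ← walkPos_eq_sum_step,
    walkPos_append_of_le h e t le_rfl, walkPos_eq_sum_step t]
  congr 1
  refine sum_congr rfl fun i _ => ?_
  rw [step_append, if_neg (by omega), Nat.add_sub_cancel_left]

lemma walkPos_append_add_of_eq_zero (h : a + b = N) {e : Fin a → Bool} (he : walkPos e a = 0)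
    (t : Fin b → Bool) (u : ℕ) : walkPos (append h e t) (a + u) = walkPos t u := by
  rw [walkPos_append_add, he, zero_add]

lemma card_filter_eq_card_mul_card_of_append (h : a + b = N) (p : (Fin N → Bool) → Prop)
    [DecidablePred p] (A : Finset (Fin a → Bool)) (B : Finset (Fin b → Bool))
    (hp : ∀ e t, p (append h e t) ↔ e ∈ A ∧ t ∈ B) : #{s | p s} = #A * #B := by
  rw [← card_product]
  exact (card_equiv (appendEquiv h) (by simp [appendEquiv, hp])).symm

lemma card_filter_eq_sum_append (h : a + b = N) (p : (Fin N → Bool) → Prop) [DecidablePred p] :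
    #{s | p s} = ∑ e, #{t | p (append h e t)} := by
  rw [← card_equiv (appendEquiv h) (s := {x | p (append h x.1 x.2)}) (by simp [appendEquiv]),
    card_filter, Fintype.sum_prod_type]
  simp only [card_filter]

end Append

lemma sum_range_two_mul {M : Type*} [AddCommMonoid M] (f : ℕ → M) (n : ℕ) :
    ∑ m ∈ range (2 * n), f m = ∑ j ∈ range n, (f (2 * j) + f (2 * j + 1)) := by
  induction n with
  | zero => simp
  | succ n ih =>
    rw [sum_range_succ, ← ih, show 2 * (n + 1) = 2 * n + 1 + 1 by ring,
      sum_range_succ, sum_range_succ, add_assoc]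

def posOddCount (s : Fin (2 * n) → Bool) : ℕ :=
  #{j ∈ range n | 0 < walkPos s (2 * j + 1)}

lemma sojournTime_eq_two_mul_posOddCount (s : Fin (2 * n) → Bool) :
    sojournTime s = 2 * posOddCount s := by
  have hleft : ∀ j < n, 0 < walkPos s (2 * j) ∨ 0 < walkPos s (2 * j + 1) ↔
      0 < walkPos s (2 * j + 1) := fun j hj => by
    refine ⟨fun h => h.elim (fun h => ?_) id, Or.inr⟩
    have := two_le_walkPos_of_even s (m := 2 * j) (by omega) (even_two_mul j) h
    have := walkPos_le_succ_add_one s (2 * j)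
    omega
  have hright : ∀ j < n, 0 < walkPos s (2 * j + 1) ∨ 0 < walkPos s (2 * j + 1 + 1) ↔
      0 < walkPos s (2 * j + 1) := fun j hj => by
    refine ⟨fun h => h.elim id fun h => ?_, Or.inl⟩
    have := two_le_walkPos_of_even s (m := 2 * j + 1 + 1) (by omega) ⟨j + 1, by ring⟩ h
    have := walkPos_succ_le s (2 * j + 1)
    omega
  rw [sojournTime, posOddCount, card_filter, card_filter, sum_range_two_mul, mul_sum]
  refine sum_congr rfl fun j hj => ?_
  rw [mem_range] at hj
  simp only [hleft j hj, hright j hj]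
  split <;> rfl

lemma posOddCount_le (s : Fin (2 * n) → Bool) : posOddCount s ≤ n :=
  (card_filter_le _ _).trans (card_range n).le

lemma posOddCount_eq_self_iff (s : Fin (2 * n) → Bool) :
    posOddCount s = n ↔ ∀ j < n, 0 < walkPos s (2 * j + 1) := by
  have := card_filter_eq_iff (s := range n) (p := fun j => 0 < walkPos s (2 * j + 1))
  rw [card_range] at this
  simpa [posOddCount] using this

lemma posOddCount_reflect (s : Fin (2 * n) → Bool) :
    posOddCount (reflect s) = n - posOddCount s := by
  have hfilter : {j ∈ range n | 0 < walkPos (reflect s) (2 * j + 1)} =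
      range n \ {j ∈ range n | 0 < walkPos s (2 * j + 1)} := by
    ext j
    simp only [mem_filter, mem_sdiff, mem_range, walkPos_reflect]
    constructor
    · rintro ⟨hj, hneg⟩
      exact ⟨hj, fun h => by omega⟩
    · rintro ⟨hj, hnpos⟩
      have := walkPos_ne_zero_of_odd s (m := 2 * j + 1) (by omega) (odd_two_mul_add_one j)
      exact ⟨hj, by omega⟩
  rw [posOddCount, hfilter, card_sdiff_of_subset (filter_subset _ _), card_range, posOddCount]

lemma forall_walkPos_odd_pos_iff (s : Fin (2 * n) → Bool) :
    (∀ j < n, 0 < walkPos s (2 * j + 1)) ↔ ∀ m ≤ 2 * n, 0 ≤ walkPos s m := by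
  constructor
  · intro h m hm
    obtain ⟨c, rfl | rfl⟩ := Nat.even_or_odd' m
    · rcases c with _ | c
      · simp
      · have := h c (by omega)
        have := walkPos_le_succ_add_one s (2 * c + 1)
        rw [show 2 * c + 1 + 1 = 2 * (c + 1) by ring] at this
        omega
    · exact (h c (by omega)).le
  · intro h j hj
    have := h (2 * j + 1) (by omega)
    have := walkPos_ne_zero_of_odd s (m := 2 * j + 1) (by omega) (odd_two_mul_add_one j)
    omega

def posExcursions (r : ℕ) : Finset (Fin (2 * r) → Bool) :=
  {e | (∀ m < 2 * r, 0 < m → 0 < walkPos e m) ∧ walkPos e (2 * r) = 0}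

def negExcursions (r : ℕ) : Finset (Fin (2 * r) → Bool) :=
  {e | (∀ m < 2 * r, 0 < m → walkPos e m < 0) ∧ walkPos e (2 * r) = 0}

def excursions (r : ℕ) : Finset (Fin (2 * r) → Bool) :=
  {e | (∀ m < 2 * r, 0 < m → walkPos e m ≠ 0) ∧ walkPos e (2 * r) = 0}

lemma excursions_eq_union {r : ℕ} (hr : 0 < r) :
    excursions r = posExcursions r ∪ negExcursions r := by
  ext e
  simp only [excursions, posExcursions, negExcursions, mem_filter, mem_union, mem_univ,
    true_and]
  constructor
  · rintro ⟨hne, hz⟩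
    rcases (hne 1 (by omega) one_pos).lt_or_gt with hneg | hpos
    · have := walkPos_pos_of_ne_zero (reflect e) (b := 2 * r - 1)
        (fun m hm hmr => by rw [walkPos_reflect, neg_ne_zero]; exact hne m (by omega) hm)
        (by rw [walkPos_reflect]; omega)
      refine .inr ⟨fun m hmr hm => ?_, hz⟩
      have := this m hm (by omega)
      rw [walkPos_reflect] at this
      omega
    · exact .inl ⟨fun m hmr hm => walkPos_pos_of_ne_zero e (b := 2 * r - 1)
        (fun m hm hmr => hne m (by omega) hm) hpos m hm (by omega), hz⟩
  · rintro (⟨hpos, hz⟩ | ⟨hneg, hz⟩)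
    · exact ⟨fun m hmr hm => (hpos m hmr hm).ne', hz⟩
    · exact ⟨fun m hmr hm => (hneg m hmr hm).ne, hz⟩

lemma disjoint_posExcursions_negExcursions {r : ℕ} (hr : 0 < r) :
    Disjoint (posExcursions r) (negExcursions r) := by
  rw [disjoint_left]
  intro e hpos hneg
  simp only [posExcursions, negExcursions, mem_filter] at hpos hneg
  have := hpos.2.1 1 (by omega) one_pos
  have := hneg.2.1 1 (by omega) one_pos
  omega

lemma card_negExcursions (r : ℕ) : #(negExcursions r) = #(posExcursions r) := by
  rw [negExcursions, posExcursions, card_filter_reflect]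
  simp only [walkPos_reflect, Left.neg_neg_iff, neg_eq_zero]

lemma card_excursions {r : ℕ} (hr : 0 < r) : #(excursions r) = 2 * #(posExcursions r) := by
  rw [excursions_eq_union hr, card_union_of_disjoint (disjoint_posExcursions_negExcursions hr),
    card_negExcursions]
  omega

def FirstReturnAt (s : Fin N → Bool) (r : ℕ) : Prop :=
  walkPos s (2 * r) = 0 ∧ ∀ r' ∈ Ico 1 r, walkPos s (2 * r') ≠ 0

def NoReturn (s : Fin N → Bool) (n : ℕ) : Prop :=
  ∀ r ∈ Icc 1 n, walkPos s (2 * r) ≠ 0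

instance (s : Fin N → Bool) (r : ℕ) : Decidable (FirstReturnAt s r) := by
  unfold FirstReturnAt; infer_instance

instance (s : Fin N → Bool) (n : ℕ) : Decidable (NoReturn s n) := by
  unfold NoReturn; infer_instance

lemma FirstReturnAt.eq {s : Fin N → Bool} {r r' : ℕ} (h : FirstReturnAt s r)
    (h' : FirstReturnAt s r') (hr : 0 < r) (hr' : 0 < r') : r = r' := by
  by_contra hne
  rcases Nat.lt_or_gt_of_ne hne with hlt | hlt
  · exact h'.2 r (mem_Ico.mpr ⟨hr, hlt⟩) h.1
  · exact h.2 r' (mem_Ico.mpr ⟨hr', hlt⟩) h'.1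

lemma exists_firstReturnAt {s : Fin N → Bool} (h : ¬ NoReturn s n) :
    ∃ r ∈ Icc 1 n, FirstReturnAt s r := by
  simp only [NoReturn, not_forall, not_not, mem_Icc] at h
  obtain ⟨r, hr, hz⟩ := h
  have hex : ∃ r, 0 < r ∧ walkPos s (2 * r) = 0 := ⟨r, hr.1, hz⟩
  refine ⟨Nat.find hex, mem_Icc.mpr ⟨(Nat.find_spec hex).1,
    (Nat.find_min' hex ⟨hr.1, hz⟩).trans hr.2⟩, (Nat.find_spec hex).2, fun r' hr' hz' => ?_⟩
  rw [mem_Ico] at hr'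
  exact Nat.find_min hex hr'.2 ⟨hr'.1, hz'⟩

lemma card_filter_eq_add_sum_firstReturnAt (n : ℕ) (p : (Fin N → Bool) → Prop)
    [DecidablePred p] :
    #{s | p s} = #{s | p s ∧ NoReturn s n} + ∑ r ∈ Icc 1 n, #{s | p s ∧ FirstReturnAt s r} := by
  have hunion : ({s | p s ∧ ¬ NoReturn s n} : Finset (Fin N → Bool)) =
      (Icc 1 n).biUnion fun r => {s | p s ∧ FirstReturnAt s r} := by
    ext s
    simp only [mem_filter, mem_univ, true_and, mem_biUnion]
    constructor
    · rintro ⟨hp, hnr⟩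
      obtain ⟨r, hr, hfr⟩ := exists_firstReturnAt hnr
      exact ⟨r, hr, hp, hfr⟩
    · rintro ⟨r, hr, hp, hfr⟩
      exact ⟨hp, fun hnr => hnr r hr hfr.1⟩
  rw [← card_filter_add_card_filter_not (s := {s | p s}) (fun s => NoReturn s n),
    filter_filter, filter_filter, hunion, card_biUnion]
  intro r hr r' hr' hne
  simp only [Function.onFun, disjoint_left, mem_filter, mem_univ, true_and]
  intro s hs hs'
  simp only [coe_Icc, Set.mem_Icc] at hr hr'
  exact hne (hs.2.eq hs'.2 hr.1 hr'.1)

lemma firstReturnAt_append_iff {r b : ℕ} (h : 2 * r + b = N) (e : Fin (2 * r) → Bool)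
    (t : Fin b → Bool) : FirstReturnAt (append h e t) r ↔ e ∈ excursions r := by
  simp only [FirstReturnAt, excursions, mem_filter, mem_univ, true_and, mem_Ico,
    walkPos_append_of_le h e t le_rfl]
  constructor
  · rintro ⟨hz, hne⟩
    refine ⟨fun m hmr hm => ?_, hz⟩
    obtain ⟨c, rfl | rfl⟩ := Nat.even_or_odd' m
    · rw [← walkPos_append_of_le h e t hmr.le]
      exact hne c ⟨by omega, by omega⟩
    · exact walkPos_ne_zero_of_odd e hmr.le (odd_two_mul_add_one c)
  · rintro ⟨hne, hz⟩
    refine ⟨hz, fun r' hr' => ?_⟩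
    rw [walkPos_append_of_le h e t (by omega)]
    exact hne _ (by omega) (by omega)

lemma card_filter_firstReturnAt {r b : ℕ} (h : 2 * r + b = N) (p : (Fin N → Bool) → Prop)
    [DecidablePred p] :
    #{s | p s ∧ FirstReturnAt s r} = ∑ e ∈ excursions r, #{t | p (append h e t)} := by
  rw [card_filter_eq_sum_append h, ← sum_subset (subset_univ (excursions r))]
  · refine sum_congr rfl fun e he => ?_
    simp only [firstReturnAt_append_iff, he, and_true]
  · intro e _ he
    simp only [firstReturnAt_append_iff, he, and_false, filter_false, card_empty]

lemma card_filter_card_eq_choose (n k : ℕ) :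
    #{s : Fin n → Bool | #{i | s i} = k} = n.choose k := by
  rw [← card_fin n, ← card_powersetCard, card_fin]
  refine card_nbij' (fun s => ({i | s i} : Finset (Fin n))) (fun A i => decide (i ∈ A)) ?_ ?_ ?_ ?_
  · intro s hs
    simp_all [mem_powersetCard]
  · intro A hA
    simp_all [mem_powersetCard]
  · intro s _
    funext i
    simp
  · intro A _
    ext i
    simp

lemma walkPos_eq_two_mul_card_sub (s : Fin N → Bool) : walkPos s N = 2 * #{i | s i} - N := by
  have hstep : ∀ i : Fin N, step s i = 2 * (if s i then 1 else 0) - 1 := fun i => by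
    simp only [step, i.isLt, dif_pos, Fin.eta]
    split <;> simp
  rw [walkPos_eq_sum_step, ← Fin.sum_univ_eq_sum_range, sum_congr rfl fun i _ => hstep i,
    sum_sub_distrib, ← mul_sum, sum_boole, sum_const, card_univ, Fintype.card_fin]
  simp

lemma card_bridges (m : ℕ) :
    #{s : Fin (2 * m) → Bool | walkPos s (2 * m) = 0} = m.centralBinom := by
  rw [Nat.centralBinom_eq_two_mul_choose, ← card_filter_card_eq_choose]
  congr 1
  ext s
  simp only [mem_filter, mem_univ, true_and, walkPos_eq_two_mul_card_sub]
  omega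

/-- Decomposing a bridge at its first return to `0`. -/
lemma centralBinom_eq_two_mul_sum {m : ℕ} (hm : 0 < m) :
    m.centralBinom = 2 * ∑ r ∈ Icc 1 m, #(posExcursions r) * (m - r).centralBinom := by
  rw [← card_bridges, card_filter_eq_add_sum_firstReturnAt m]
  have hnoReturn : #{s : Fin (2 * m) → Bool | walkPos s (2 * m) = 0 ∧ NoReturn s m} = 0 :=
    card_filter_eq_zero_iff.mpr fun s _ hs => hs.2 m (mem_Icc.mpr ⟨hm, le_rfl⟩) hs.1
  rw [hnoReturn, zero_add, mul_sum]
  refine sum_congr rfl fun r hr => ?_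
  rw [mem_Icc] at hr
  have h : 2 * r + 2 * (m - r) = 2 * m := by omega
  rw [card_filter_firstReturnAt h]
  have hbridge : ∀ e ∈ excursions r,
      #{t | walkPos (append h e t) (2 * m) = 0} = (m - r).centralBinom := fun e he => by
    simp only [excursions, mem_filter] at he
    simp only [← h, walkPos_append_add_of_eq_zero h he.2.2, card_bridges]
  rw [sum_congr rfl hbridge, sum_const, smul_eq_mul, card_excursions hr.1, mul_assoc]

lemma posOddCount_append {r n' : ℕ} (h : 2 * r + 2 * n' = 2 * n) {e : Fin (2 * r) → Bool}
    (he : walkPos e (2 * r) = 0) (t : Fin (2 * n') → Bool) :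
    posOddCount (append h e t) = posOddCount e + posOddCount t := by
  obtain rfl : n = r + n' := by omega
  simp only [posOddCount, card_filter, sum_range_add]
  congr 1
  · refine sum_congr rfl fun j hj => ?_
    rw [walkPos_append_of_le h e t (by simp at hj; omega)]
  · refine sum_congr rfl fun u _ => ?_
    rw [show 2 * (r + u) + 1 = 2 * r + (2 * u + 1) by ring, walkPos_append_add_of_eq_zero h he]

lemma posOddCount_of_mem_posExcursions {r : ℕ} {e : Fin (2 * r) → Bool}
    (he : e ∈ posExcursions r) : posOddCount e = r := by
  simp only [posExcursions, mem_filter, mem_univ, true_and] at he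
  exact (posOddCount_eq_self_iff e).mpr fun j hj => he.1 _ (by omega) (by omega)

lemma posOddCount_of_mem_negExcursions {r : ℕ} {e : Fin (2 * r) → Bool}
    (he : e ∈ negExcursions r) : posOddCount e = 0 := by
  simp only [negExcursions, mem_filter, mem_univ, true_and] at he
  refine card_filter_eq_zero_iff.mpr fun j hj => ?_
  have := he.1 (2 * j + 1) (by simp at hj; omega) (by omega)
  omega

/-- `2^{2n} c^{(2n)}(2k)` in Feller's notation. -/
def count (n k : ℕ) : ℕ := #{s : Fin (2 * n) → Bool | posOddCount s = k}

lemma count_eq_zero_of_lt {k : ℕ} (h : n < k) : count n k = 0 :=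
  card_filter_eq_zero_iff.mpr fun s _ hs => by have := posOddCount_le s; omega

lemma count_zero_zero : count 0 0 = 1 := by
  simp [count, posOddCount]

lemma count_zero_eq_count_self (n : ℕ) : count n 0 = count n n := by
  rw [count, card_filter_reflect, count]
  congr 1
  ext s
  have := posOddCount_le s
  simp only [mem_filter, mem_univ, true_and, posOddCount_reflect]
  omega

lemma card_filter_add_posOddCount_eq (r k : ℕ) :
    #{t : Fin (2 * n) → Bool | r + posOddCount t = k} = if r ≤ k then count n (k - r) else 0 := by
  split_ifs with hrk
  · rw [count]
    congr 1
    ext t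
    simp only [mem_filter, mem_univ, true_and]
    omega
  · exact card_filter_eq_zero_iff.mpr fun t _ ht => by omega

lemma count_eq_add_sum (n k : ℕ) :
    count n k = #{s : Fin (2 * n) → Bool | posOddCount s = k ∧ NoReturn s n} +
      ∑ r ∈ Icc 1 n, #(posExcursions r) * ((if r ≤ k then count (n - r) (k - r) else 0) +
        count (n - r) k) := by
  rw [count, card_filter_eq_add_sum_firstReturnAt n]
  congr 1
  refine sum_congr rfl fun r hr => ?_
  rw [mem_Icc] at hr
  have h : 2 * r + 2 * (n - r) = 2 * n := by omega
  rw [card_filter_firstReturnAt h, excursions_eq_union hr.1,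
    sum_union (disjoint_posExcursions_negExcursions hr.1)]
  have hpos : ∀ e ∈ posExcursions r, #{t | posOddCount (append h e t) = k} =
      if r ≤ k then count (n - r) (k - r) else 0 := fun e he => by
    simp only [posOddCount_append h (mem_filter.mp he).2.2, posOddCount_of_mem_posExcursions he,
      card_filter_add_posOddCount_eq]
  have hneg : ∀ e ∈ negExcursions r, #{t | posOddCount (append h e t) = k} =
      count (n - r) k := fun e he => by
    simp only [posOddCount_append h (mem_filter.mp he).2.2, posOddCount_of_mem_negExcursions he,
      zero_add, count]
  rw [sum_congr rfl hpos, sum_congr rfl hneg, sum_const, sum_const, card_negExcursions,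
    smul_eq_mul, smul_eq_mul, mul_add]

def nonnegWalks (L : ℕ) : Finset (Fin L → Bool) := {t | ∀ m ≤ L, 0 ≤ walkPos t m}

/-- The last step of a nonnegative walk of even length is free: at the odd time `2n - 1` the
walk is at least `1`. -/
lemma count_self_eq_two_mul_card_nonnegWalks (hn : 0 < n) :
    count n n = 2 * #(nonnegWalks (2 * n - 1)) := by
  have h : (2 * n - 1) + 1 = 2 * n := by omega
  have hp : ∀ e t, (∀ m ≤ 2 * n, 0 ≤ walkPos (append h e t) m) ↔
      e ∈ nonnegWalks (2 * n - 1) ∧ t ∈ univ := fun e t => by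
    simp only [nonnegWalks, mem_filter, mem_univ, true_and, and_true]
    constructor
    · intro hs m hm
      rw [← walkPos_append_of_le h e t hm]
      exact hs m (by omega)
    · intro he m hm
      rcases Nat.lt_or_ge m (2 * n) with hm' | hm'
      · rw [walkPos_append_of_le h e t (by omega)]
        exact he m (by omega)
      · have hodd := walkPos_ne_zero_of_odd (append h e t) (m := 2 * n - 1) (by omega)
          ⟨n - 1, by omega⟩
        have := walkPos_le_succ_add_one (append h e t) (2 * n - 1)
        rw [walkPos_append_of_le h e t le_rfl] at hodd this
        rw [show m = 2 * n - 1 + 1 by omega]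
        have := he (2 * n - 1) le_rfl
        omega
  have hcount : count n n = #{s : Fin (2 * n) → Bool | ∀ m ≤ 2 * n, 0 ≤ walkPos s m} := by
    simp only [count, posOddCount_eq_self_iff, forall_walkPos_odd_pos_iff]
  rw [hcount, card_filter_eq_card_mul_card_of_append h _ _ _ hp, card_univ, mul_comm]
  simp

lemma card_filter_forall_walkPos_pos (hn : 0 < n) :
    #{s : Fin (2 * n) → Bool | ∀ m ≤ 2 * n, 0 < m → 0 < walkPos s m} =
      #(nonnegWalks (2 * n - 1)) := by
  have h : 1 + (2 * n - 1) = 2 * n := by omega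
  have hfirst : ∀ e : Fin 1 → Bool, walkPos e 1 = if e 0 then 1 else -1 := fun e => by
    simp [walkPos]
  have hp : ∀ e t, (∀ m ≤ 2 * n, 0 < m → 0 < walkPos (append h e t) m) ↔
      e ∈ ({fun _ => true} : Finset (Fin 1 → Bool)) ∧ t ∈ nonnegWalks (2 * n - 1) := fun e t => by
    simp only [nonnegWalks, mem_filter, mem_univ, true_and, mem_singleton]
    constructor
    · intro hs
      have he : e 0 = true := by
        have := hs 1 (by omega) one_pos
        rw [walkPos_append_of_le h e t le_rfl, hfirst] at this
        by_contra hne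
        simp [hne] at this
      refine ⟨funext fun i => by rwa [Subsingleton.elim i 0], fun u hu => ?_⟩
      have := hs (1 + u) (by omega) (by omega)
      rw [walkPos_append_add, hfirst, he] at this
      omega
    · rintro ⟨rfl, ht⟩ m hm' hm
      obtain ⟨u, rfl⟩ : ∃ u, m = 1 + u := ⟨m - 1, by omega⟩
      rw [walkPos_append_add, hfirst]
      have := ht u (by omega)
      simp only [if_true]
      omega
  rw [card_filter_eq_card_mul_card_of_append h _ _ _ hp, card_singleton, one_mul]

lemma forall_walkPos_pos_of_noReturn {s : Fin (2 * n) → Bool} (hs : NoReturn s n)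
    (h1 : 0 < walkPos s 1) : ∀ m ≤ 2 * n, 0 < m → 0 < walkPos s m := by
  have hne : ∀ m, 0 < m → m ≤ 2 * n → walkPos s m ≠ 0 := fun m hm hmn => by
    obtain ⟨c, rfl | rfl⟩ := Nat.even_or_odd' m
    · exact hs c (mem_Icc.mpr ⟨by omega, by omega⟩)
    · exact walkPos_ne_zero_of_odd s hmn (odd_two_mul_add_one c)
  exact fun m hmn hm => walkPos_pos_of_ne_zero s hne h1 m hm hmn

lemma posOddCount_eq_self_and_noReturn_iff (s : Fin (2 * n) → Bool) :
    posOddCount s = n ∧ NoReturn s n ↔ ∀ m ≤ 2 * n, 0 < m → 0 < walkPos s m := by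
  rw [posOddCount_eq_self_iff]
  constructor
  · rintro ⟨hodd, hs⟩ m hmn hm
    exact forall_walkPos_pos_of_noReturn hs (hodd 0 (by omega)) m hmn hm
  · intro hpos
    refine ⟨fun j hj => hpos _ (by omega) (by omega), fun r hr => ?_⟩
    rw [mem_Icc] at hr
    exact (hpos (2 * r) (by omega) (by omega)).ne'

lemma posOddCount_eq_zero_or_eq_self_of_noReturn {s : Fin (2 * n) → Bool} (hs : NoReturn s n) :
    posOddCount s = 0 ∨ posOddCount s = n := by
  have hle := posOddCount_le s
  rcases Nat.eq_zero_or_pos n with rfl | hn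
  · omega
  rcases (walkPos_ne_zero_of_odd s (m := 1) (by omega) odd_one).lt_or_gt with hneg | hpos
  · have hs' : NoReturn (reflect s) n := fun r hr => by
      rw [walkPos_reflect, neg_ne_zero]
      exact hs r hr
    have := (posOddCount_eq_self_and_noReturn_iff (reflect s)).mpr
      (forall_walkPos_pos_of_noReturn hs' (by rw [walkPos_reflect]; omega))
    rw [posOddCount_reflect] at this
    omega
  · exact .inr ((posOddCount_eq_self_and_noReturn_iff s).mpr
      (forall_walkPos_pos_of_noReturn hs hpos)).1

lemma count_self (n : ℕ) : count n n = n.centralBinom := by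
  induction n using Nat.strong_induction_on with
  | _ n ih =>
  rcases Nat.eq_zero_or_pos n with rfl | hn
  · exact count_zero_zero
  have hnoReturn : #{s : Fin (2 * n) → Bool | posOddCount s = n ∧ NoReturn s n} =
      #(nonnegWalks (2 * n - 1)) := by
    simp only [← card_filter_forall_walkPos_pos hn, posOddCount_eq_self_and_noReturn_iff]
  have hsum : ∑ r ∈ Icc 1 n, #(posExcursions r) *
      ((if r ≤ n then count (n - r) (n - r) else 0) + count (n - r) n) =
      ∑ r ∈ Icc 1 n, #(posExcursions r) * (n - r).centralBinom := sum_congr rfl fun r hr => by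
    rw [mem_Icc] at hr
    rw [if_pos hr.2, ih (n - r) (by omega), count_eq_zero_of_lt (by omega), add_zero]
  have hdecomp := count_eq_add_sum n n
  rw [hnoReturn, hsum] at hdecomp
  have := count_self_eq_two_mul_card_nonnegWalks hn
  have := centralBinom_eq_two_mul_sum hn
  omega

lemma count_eq_of_pos_of_lt {n k : ℕ} (hk : 0 < k) (hkn : k < n)
    (ih : ∀ m < n, ∀ j ≤ m, count m j = j.centralBinom * (m - j).centralBinom) :
    count n k = k.centralBinom * (n - k).centralBinom := by
  have hnoReturn : #{s : Fin (2 * n) → Bool | posOddCount s = k ∧ NoReturn s n} = 0 :=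
    card_filter_eq_zero_iff.mpr fun s _ hs => by
      rcases posOddCount_eq_zero_or_eq_self_of_noReturn hs.2 with h | h <;> omega
  have hfirst : ∑ r ∈ Icc 1 n, #(posExcursions r) * (if r ≤ k then count (n - r) (k - r) else 0) =
      (∑ r ∈ Icc 1 k, #(posExcursions r) * (k - r).centralBinom) * (n - k).centralBinom := by
    rw [sum_mul, ← sum_subset (Icc_subset_Icc_right hkn.le)]
    · refine sum_congr rfl fun r hr => ?_
      rw [mem_Icc] at hr
      rw [if_pos hr.2, ih (n - r) (by omega) (k - r) (by omega),
        show n - r - (k - r) = n - k by omega, mul_assoc]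
    · intro r hr hr'
      rw [mem_Icc] at hr
      rw [mem_Icc, not_and, not_le] at hr'
      rw [if_neg (by omega), mul_zero]
  have hsecond : ∑ r ∈ Icc 1 n, #(posExcursions r) * count (n - r) k =
      (∑ r ∈ Icc 1 (n - k), #(posExcursions r) * (n - k - r).centralBinom) * k.centralBinom := by
    rw [sum_mul, ← sum_subset (Icc_subset_Icc_right (Nat.sub_le n k))]
    · refine sum_congr rfl fun r hr => ?_
      rw [mem_Icc] at hr
      rw [ih (n - r) (by omega) k (by omega), show n - r - k = n - k - r by omega]
      ring
    · intro r hr hr'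
      rw [mem_Icc] at hr
      rw [mem_Icc, not_and, not_le] at hr'
      rw [count_eq_zero_of_lt (by omega), mul_zero]
  calc count n k
      = (∑ r ∈ Icc 1 k, #(posExcursions r) * (k - r).centralBinom) * (n - k).centralBinom +
        (∑ r ∈ Icc 1 (n - k), #(posExcursions r) * (n - k - r).centralBinom) *
          k.centralBinom := by
        rw [count_eq_add_sum, hnoReturn, zero_add, ← hfirst, ← hsecond, ← sum_add_distrib]
        simp only [mul_add]
    _ = k.centralBinom * (n - k).centralBinom := by
        rw [centralBinom_eq_two_mul_sum hk, centralBinom_eq_two_mul_sum (m := n - k) (by omega)]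
        ring

lemma count_eq (n : ℕ) : ∀ k ≤ n, count n k = k.centralBinom * (n - k).centralBinom := by
  induction n using Nat.strong_induction_on with
  | _ n ih =>
  intro k hk
  rcases Nat.eq_zero_or_pos k with rfl | hk0
  · simp [count_zero_eq_count_self, count_self]
  rcases hk.eq_or_lt with rfl | hkn
  · simp [count_self]
  exact count_eq_of_pos_of_lt hk0 hkn ih

end RandomWalk

theorem stmt0_general (n k : ℕ) (hk : k ≤ n) :
    (((Finset.univ : Finset (Fin (2 * n) → Bool)).filter
        (fun s => sojournTime s = 2 * k)).card : ℝ) / 2 ^ (2 * n)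
      = (1 / 2 : ℝ) ^ (2 * n) * Nat.choose (2 * k) k * Nat.choose (2 * (n - k)) (n - k) := by
  have hcount : #{s : Fin (2 * n) → Bool | sojournTime s = 2 * k} = RandomWalk.count n k := by
    simp only [RandomWalk.count, RandomWalk.sojournTime_eq_two_mul_posOddCount,
      Nat.mul_left_cancel_iff two_pos]
  rw [hcount, RandomWalk.count_eq n k hk, Nat.centralBinom_eq_two_mul_choose,
    Nat.centralBinom_eq_two_mul_choose]
  push_cast
  rw [one_div, inv_pow]
  ring

/-- The probability that the simple symmetric random walk spends exactly `2k` of the first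
`2n` time units on the positive side equals `(1/2)^{2n} C(2k,k) C(2(n-k),n-k)`. -/
theorem stmt0 (n k : ℕ) (hn : 1 ≤ n) (hk : k ≤ n) :
    (((Finset.univ : Finset (Fin (2 * n) → Bool)).filter
        (fun s => sojournTime s = 2 * k)).card : ℝ) / 2 ^ (2 * n)
      = (1 / 2 : ℝ) ^ (2 * n) * Nat.choose (2 * k) k * Nat.choose (2 * (n - k)) (n - k) :=
  stmt0_general n k hk
end

section
/- For the simple symmetric random walk conditioned to start at the origin and return to the origin at time 2n, the probability that the walker spends exactly 2k time units on the positive side equals 1/(n+1), independently of k ∈ {0, 1, ..., n} (the equidistribution theorem). -/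
/-!
Encode a path by its list of steps and let `posTime h l` be the time spent on the positive side
by the path `l` started at height `h`. A bridge whose first step is up splits uniquely at its
first return to `0` as `true :: u ++ false :: v`, where `u` is a bridge that never goes below `0`
(equivalently, spends all of its time on the positive side) and `v` is any bridge; its positive
time is `|u| + 2 + posTime 0 v`. Reflecting a bridge turns positive time `j` into `N - j`, which
reduces down-starting bridges to up-starting ones. So, writing `B(n, k)` for the number of bridges
of length `2n` with positive time `2k`,
`B(n+1, k) = ∑_{m<k} B(m, m) B(n-m, k-1-m) + ∑_{m<n+1-k} B(m, m) B(n-m, n-k-m)`.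
By strong induction every factor is a Catalan number, and the two sums are complementary pieces
of the Catalan convolution, folded by the symmetry `m ↦ n - m`. Hence `B(n, k) = C_n`, and
`C(2n, n) = (n + 1) C_n`.
-/

open Finset
namespace ChungFeller

def step (b : Bool) : ℤ := if b then 1 else -1

def height (l : List Bool) : ℤ := (l.map step).sum

def posTime : ℤ → List Bool → ℕ
  | _, [] => 0
  | h, b :: l => (if 0 < h ∨ 0 < h + step b then 1 else 0) + posTime (h + step b) l

@[simp] lemma step_not (b : Bool) : step (!b) = -step b := by
  cases b <;> rfl

lemma step_eq_one_or_eq_neg_one (b : Bool) : step b = 1 ∨ step b = -1 := by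
  cases b <;> simp [step]

@[simp] lemma height_nil : height [] = 0 := rfl

@[simp] lemma height_cons (b : Bool) (l : List Bool) : height (b :: l) = step b + height l := by
  simp [height]

@[simp] lemma height_append (l₁ l₂ : List Bool) :
    height (l₁ ++ l₂) = height l₁ + height l₂ := by
  simp [height]

@[simp] lemma height_map_not (l : List Bool) : height (l.map not) = -height l := by
  induction l with
  | nil => rfl
  | cons b l ih => rw [List.map_cons, height_cons, height_cons, ih, step_not, neg_add]

lemma even_height_add_length (l : List Bool) : Even (height l + l.length) := by
  induction l with
  | nil => simp
  | cons b l ih =>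
    obtain ⟨c, hc⟩ := ih
    rcases step_eq_one_or_eq_neg_one b with hb | hb
    · exact ⟨c + 1, by simp [hb]; omega⟩
    · exact ⟨c, by simp [hb]; omega⟩

lemma even_length_of_height_eq_zero {l : List Bool} (h : height l = 0) : Even l.length := by
  simpa [h, Int.even_coe_nat] using even_height_add_length l

@[simp] lemma posTime_nil (h : ℤ) : posTime h [] = 0 := rfl

lemma posTime_cons (h : ℤ) (b : Bool) (l : List Bool) :
    posTime h (b :: l) = (if 0 < h ∨ 0 < h + step b then 1 else 0) + posTime (h + step b) l :=
  rfl

lemma posTime_append (h : ℤ) (l₁ l₂ : List Bool) :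
    posTime h (l₁ ++ l₂) = posTime h l₁ + posTime (h + height l₁) l₂ := by
  induction l₁ generalizing h with
  | nil => simp
  | cons b l ih => simp only [List.cons_append, posTime_cons, ih, height_cons, add_assoc]

lemma posTime_le_length (h : ℤ) (l : List Bool) : posTime h l ≤ l.length := by
  induction l generalizing h with
  | nil => simp
  | cons b l ih =>
    have := ih (h + step b)
    rw [posTime_cons, List.length_cons]
    split_ifs <;> omega

lemma posTime_mono {h h' : ℤ} (hh : h ≤ h') (l : List Bool) : posTime h l ≤ posTime h' l := by
  induction l generalizing h h' with
  | nil => simp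
  | cons b l ih =>
    rw [posTime_cons, posTime_cons]
    have := ih (show h + step b ≤ h' + step b by omega)
    split_ifs <;> omega

-- A step between consecutive heights has a positive endpoint iff it has no negative one.
lemma posTime_neg_map_not_add (h : ℤ) (l : List Bool) :
    posTime (-h) (l.map not) + posTime h l = l.length := by
  induction l generalizing h with
  | nil => simp
  | cons b l ih =>
    rw [List.map_cons, posTime_cons, posTime_cons, step_not, ← neg_add, List.length_cons,
      ← ih (h + step b)]
    have := step_eq_one_or_eq_neg_one b
    split_ifs <;> omega

lemma exists_eq_append_false_cons {h : ℤ} (hh : 0 ≤ h) {t : List Bool} (ht : h + height t < 0) :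
    ∃ u v, t = u ++ false :: v ∧ h + height u = 0 ∧ posTime h u = u.length := by
  induction t generalizing h with
  | nil => simp at ht; omega
  | cons b t ih =>
    by_cases hb : h = 0 ∧ b = false
    · obtain ⟨rfl, rfl⟩ := hb
      exact ⟨[], t, rfl, rfl, rfl⟩
    · have hstep : 0 ≤ h + step b := by cases b <;> simp [step] at hb ⊢ <;> omega
      obtain ⟨u, v, rfl, hu, hpos⟩ := ih hstep (by simpa [add_assoc] using ht)
      refine ⟨b :: u, v, rfl, by simpa [add_assoc] using hu, ?_⟩
      have hcount : 0 < h ∨ 0 < h + step b := by cases b <;> simp [step] at hb ⊢ <;> omega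
      rw [posTime_cons, hpos, if_pos hcount, List.length_cons, add_comm]

lemma posTime_append_false_cons_lt {u : List Bool} (hu : height u = 0) (w : List Bool) :
    posTime 0 (u ++ false :: w) < (u ++ false :: w).length := by
  have := posTime_le_length 0 u
  have := posTime_le_length (-1) w
  simp [posTime_append, hu, posTime_cons, step]
  omega

lemma eq_of_append_false_cons_eq {u u' v v' : List Bool} (huv : u ++ false :: v = u' ++ false :: v')
    (hu : height u = 0) (hu' : height u' = 0)
    (hpu : posTime 0 u = u.length) (hpu' : posTime 0 u' = u'.length) : u = u' := by
  rcases List.append_eq_append_iff.mp huv with ⟨a, rfl, ha⟩ | ⟨a, rfl, ha⟩ <;> cases a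
  · simp
  · obtain ⟨rfl, -⟩ := List.cons_eq_cons.mp ha
    exact absurd hpu' (posTime_append_false_cons_lt hu _).ne
  · simp
  · obtain ⟨rfl, -⟩ := List.cons_eq_cons.mp ha
    exact absurd hpu (posTime_append_false_cons_lt hu' _).ne

lemma posTime_true_cons_append_false_cons {u : List Bool} (hu : height u = 0)
    (hpu : posTime 0 u = u.length) (v : List Bool) :
    posTime 0 (true :: u ++ false :: v) = u.length + 2 + posTime 0 v := by
  have h1 : posTime 1 u = u.length :=
    le_antisymm (posTime_le_length 1 u) (hpu ▸ posTime_mono zero_le_one u)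
  simp [posTime_cons, posTime_append, step, hu, h1]
  omega

def words (N : ℕ) : Finset (List Bool) := univ.image (List.ofFn : (Fin N → Bool) → List Bool)

lemma mem_words {N : ℕ} {l : List Bool} : l ∈ words N ↔ l.length = N := by
  refine ⟨?_, ?_⟩
  · simp only [words, mem_image, mem_univ, true_and]
    rintro ⟨s, rfl⟩
    exact List.length_ofFn
  · rintro rfl
    exact mem_image.mpr ⟨l.get, mem_univ _, List.ofFn_get l⟩

def bridges (N j : ℕ) : Finset (List Bool) :=
  (words N).filter fun l => height l = 0 ∧ posTime 0 l = j

lemma mem_bridges {N j : ℕ} {l : List Bool} :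
    l ∈ bridges N j ↔ l.length = N ∧ height l = 0 ∧ posTime 0 l = j := by
  rw [bridges, mem_filter, mem_words]

def upBridges (N j : ℕ) : Finset (List Bool) :=
  (bridges N j).filter fun l => l.head? = some true

lemma card_bridges_eq_card_upBridges_add {N j : ℕ} (hN : 0 < N) (hj : j ≤ N) :
    #(bridges N j) = #(upBridges N j) + #(upBridges N (N - j)) := by
  let flip := (Bool.involutive_not.list_map).toPerm (List.map not)
  have hdown : (bridges N j).filter (fun l => ¬ l.head? = some true) =
      (upBridges N (N - j)).map flip.toEmbedding := by
    ext l
    have hflip := posTime_neg_map_not_add 0 l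
    have hle := posTime_le_length 0 l
    rw [neg_zero] at hflip
    rcases l with _ | ⟨_ | _, l⟩ <;>
      simp [upBridges, mem_bridges, flip, step] at hflip hle ⊢ <;> omega
  rw [← card_filter_add_card_filter_not (fun l => l.head? = some true), hdown, card_map]
  rfl

lemma mem_upBridges_iff {n k : ℕ} (hk : k ≤ n + 1) {l : List Bool} :
    l ∈ upBridges (2 * (n + 1)) (2 * k) ↔
      ∃ m < k, ∃ u ∈ bridges (2 * m) (2 * m),
        ∃ v ∈ bridges (2 * (n - m)) (2 * (k - 1 - m)), true :: u ++ false :: v = l := by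
  simp only [upBridges, mem_filter, mem_bridges]
  constructor
  · rintro ⟨⟨hlen, hl, hpos⟩, hhead⟩
    obtain ⟨t, rfl⟩ : ∃ t, l = true :: t := by
      rcases l with _ | ⟨b, t⟩ <;> simp_all
    obtain ⟨u, v, rfl, hu, hpu⟩ :=
      exists_eq_append_false_cons (t := t) le_rfl (by simp [step] at hl; omega)
    rw [zero_add] at hu
    obtain ⟨m, hm⟩ := even_length_of_height_eq_zero hu
    rw [← List.cons_append, posTime_true_cons_append_false_cons hu hpu] at hpos
    simp [step, hu] at hlen hl
    exact ⟨m, by omega, u, ⟨by omega, hu, by omega⟩, v, ⟨by omega, hl, by omega⟩, rfl⟩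
  · rintro ⟨m, hm, u, ⟨hu₁, hu₂, hu₃⟩, v, ⟨hv₁, hv₂, hv₃⟩, rfl⟩
    rw [posTime_true_cons_append_false_cons hu₂ (hu₃.trans hu₁.symm)]
    simp [step, hu₂, hv₂]
    omega

lemma card_upBridges {n k : ℕ} (hk : k ≤ n + 1) :
    #(upBridges (2 * (n + 1)) (2 * k)) =
      ∑ m ∈ range k,
        #(bridges (2 * m) (2 * m)) * #(bridges (2 * (n - m)) (2 * (k - 1 - m))) := by
  set T := (range k).biUnion fun m =>
    bridges (2 * m) (2 * m) ×ˢ bridges (2 * (n - m)) (2 * (k - 1 - m))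
  have hT : upBridges (2 * (n + 1)) (2 * k) = T.image fun p => true :: p.1 ++ false :: p.2 := by
    ext l
    simp only [mem_upBridges_iff hk, T, mem_image, mem_biUnion, mem_product, mem_range, Prod.exists]
    constructor
    · rintro ⟨m, hm, u, hu, v, hv, rfl⟩
      exact ⟨u, v, ⟨m, hm, hu, hv⟩, rfl⟩
    · rintro ⟨u, v, ⟨m, hm, hu, hv⟩, rfl⟩
      exact ⟨m, hm, u, hu, v, hv, rfl⟩
  have hinj : Set.InjOn (fun p : List Bool × List Bool => true :: p.1 ++ false :: p.2) T := by
    rintro ⟨u, v⟩ huv ⟨u', v'⟩ huv' heq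
    simp only [T, coe_biUnion, Set.mem_iUnion, mem_coe, mem_product, mem_bridges] at huv huv'
    obtain ⟨m, -, ⟨hu₁, hu₂, hu₃⟩, -⟩ := huv
    obtain ⟨m', -, ⟨hu₁', hu₂', hu₃'⟩, -⟩ := huv'
    simp only [List.cons_append, List.cons.injEq, true_and] at heq
    obtain rfl := eq_of_append_false_cons_eq heq hu₂ hu₂' (by omega) (by omega)
    simpa using heq
  have hdisj : (range k : Set ℕ).PairwiseDisjoint fun m =>
      bridges (2 * m) (2 * m) ×ˢ bridges (2 * (n - m)) (2 * (k - 1 - m)) := by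
    intro m _ m' _ hmm'
    simp only [Function.onFun, disjoint_left, mem_product, mem_bridges]
    omega
  rw [hT, card_image_of_injOn hinj, card_biUnion hdisj]
  simp only [card_product]

lemma catalan_succ_eq_sum_range_add_sum_range {n k : ℕ} (hk : k ≤ n + 1) :
    catalan (n + 1) = ∑ m ∈ range k, catalan m * catalan (n - m) +
      ∑ m ∈ range (n + 1 - k), catalan m * catalan (n - m) := by
  have hreflect : ∑ m ∈ range (n + 1 - k), catalan m * catalan (n - m) =
      ∑ m ∈ Ico k (n + 1), catalan m * catalan (n - m) := by
    have h := sum_Ico_reflect (fun m => catalan m * catalan (n - m)) 0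
      (m := n + 1 - k) (n := n) (by omega)
    rw [show n + 1 - (n + 1 - k) = k by omega, Nat.sub_zero] at h
    rw [← h, range_eq_Ico]
    refine sum_congr rfl fun m hm => ?_
    rw [Nat.sub_sub_self (by grind), mul_comm]
  rw [catalan_succ, Fin.sum_univ_eq_sum_range (fun i => catalan i * catalan (n - i)),
    hreflect, sum_range_add_sum_Ico _ hk]

lemma card_bridges_eq_catalan (n : ℕ) : ∀ k ≤ n, #(bridges (2 * n) (2 * k)) = catalan n := by
  induction n using Nat.strong_induction_on with
  | _ n ih =>
  rcases n with _ | n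
  · intro k hk
    obtain rfl : k = 0 := by omega
    have hnil : bridges 0 0 = {[]} := by
      ext l
      rw [mem_bridges, mem_singleton, List.length_eq_zero_iff]
      constructor
      · exact And.left
      · rintro rfl
        exact ⟨rfl, rfl, rfl⟩
    simp [hnil]
  · intro k hk
    rw [card_bridges_eq_card_upBridges_add (by omega) (by omega),
      show 2 * (n + 1) - 2 * k = 2 * (n + 1 - k) by omega, card_upBridges hk,
      card_upBridges (by omega), catalan_succ_eq_sum_range_add_sum_range hk]
    congr 1 <;> refine sum_congr rfl fun m hm => ?_ <;> rw [mem_range] at hm <;>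
      rw [ih m (by omega) m le_rfl, ih (n - m) (by omega) _ (by omega)]

lemma walkPos_eq_height_take {N : ℕ} (s : Fin N → Bool) (m : ℕ) :
    walkPos s m = height ((List.ofFn s).take m) := by
  induction m with
  | zero => simp [walkPos]
  | succ m ih =>
    rw [walkPos, sum_range_succ, ← walkPos, ih, List.take_add_one, height_append]
    by_cases hm : m < N
    · simp [hm, step]
    · simp [hm]

lemma posTime_eq_card_filter (h : ℤ) (l : List Bool) :
    posTime h l = #((range l.length).filter fun m =>
      0 < h + height (l.take m) ∨ 0 < h + height (l.take (m + 1))) := by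
  induction l generalizing h with
  | nil => simp
  | cons b l ih =>
    rw [posTime_cons, ih, card_filter, card_filter, List.length_cons, sum_range_succ']
    simp [add_assoc, add_comm (ite _ _ _)]

lemma sojournTime_eq_posTime {N : ℕ} (s : Fin N → Bool) :
    sojournTime s = posTime 0 (List.ofFn s) := by
  simp [sojournTime, posTime_eq_card_filter, walkPos_eq_height_take]

lemma card_filter_walkPos_sojournTime (N j : ℕ) :
    #(univ.filter fun s : Fin N → Bool => walkPos s N = 0 ∧ sojournTime s = j) =
      #(bridges N j) := by
  rw [bridges, words, filter_image, card_image_of_injective _ List.ofFn_injective]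
  simp [walkPos_eq_height_take, sojournTime_eq_posTime, List.take_of_length_le]

end ChungFeller

/-- Equidistribution theorem: among the `C(2n,n)` equally likely `2n`-step paths from the
origin back to the origin, the conditional probability of spending exactly `2k` time units
on the positive side is `1/(n+1)`, independently of `k`. -/
theorem stmt3 (n k : ℕ) (hk : k ≤ n) :
    (((Finset.univ : Finset (Fin (2 * n) → Bool)).filter
        (fun s => walkPos s (2 * n) = 0 ∧ sojournTime s = 2 * k)).card : ℝ)
        / Nat.choose (2 * n) n
      = 1 / (n + 1) := by
  rw [ChungFeller.card_filter_walkPos_sojournTime, ChungFeller.card_bridges_eq_catalan n k hk,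
    ← Nat.centralBinom_eq_two_mul_choose, ← succ_mul_catalan_eq_centralBinom]
  have hcat : (catalan n : ℝ) ≠ 0 := Nat.cast_ne_zero.mpr fun h =>
    Nat.centralBinom_ne_zero n (by rw [← succ_mul_catalan_eq_centralBinom, h, mul_zero])
  push_cast
  field_simp
end
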